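/- arXiv:2210.06475 — 4 statements merged into one kernel-verified Lean document; each statement's English description precedes it below -/
import Mathlib

section
/- The equi-tuned model M_G solves the equi-tuning optimization problem: M_G is G-equivariant, and for every G-equivariant function f : X → Y and every x ∈ X, ∑_{g ∈ G} ‖M(g • x) − f(g • x)‖² ≥ ∑_{g ∈ G} ‖M(g • x) − M_G(g • x)‖²; that is, among all G-equivariant models, M_G minimizes the sum over the group of squared L₂ distances between the features of the pretrained model and the equivariant model. -/
/-- The equi-tuned model (Reynolds operator applied to `M`):
`M_G(x) = (1/|G|) • ∑_{g ∈ G} g⁻¹ • M (g • x)`. -/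
noncomputable def equitune (G : Type*) {X Y : Type*} [Group G] [Fintype G] [MulAction G X]
    [AddCommGroup Y] [Module ℝ Y] [DistribMulAction G Y]
    (M : X → Y) (x : X) : Y :=
  ((Fintype.card G : ℝ))⁻¹ • ∑ g : G, g⁻¹ • M (g • x)

/-!
Proof idea: substituting `x ↦ g • x` and applying the isometry `g⁻¹` turns the objective for an
equivariant `f` into `∑_g ‖g⁻¹ • M (g • x) - f x‖²`, a sum of squared distances from the points
`g⁻¹ • M (g • x)` to the single point `f x`. Such a sum is minimized at the mean of the points,
which is `M_G x`; and `M_G` is itself equivariant, by reindexing the sum over `G`.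
-/

open Finset

lemma sum_sub_mean_eq_zero {ι E : Type*} [Fintype ι] [AddCommGroup E] [Module ℝ E] (a : ι → E) :
    ∑ i, (a i - (Fintype.card ι : ℝ)⁻¹ • ∑ j, a j) = 0 := by
  rcases isEmpty_or_nonempty ι with _ | _
  · simp
  have hcard : (Fintype.card ι : ℝ) ≠ 0 := by exact_mod_cast Fintype.card_ne_zero
  rw [sum_sub_distrib, sum_const, card_univ, ← Nat.cast_smul_eq_nsmul ℝ, smul_smul,
    mul_inv_cancel₀ hcard, one_smul, sub_self]

section Mean

variable {ι E : Type*} [Fintype ι] [NormedAddCommGroup E] [InnerProductSpace ℝ E]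

/-- The parallel axis theorem. -/
lemma sum_norm_sub_sq_eq_sum_norm_sub_mean_sq_add (a : ι → E) (y : E) :
    ∑ i, ‖a i - y‖ ^ 2 = ∑ i, ‖a i - (Fintype.card ι : ℝ)⁻¹ • ∑ j, a j‖ ^ 2
      + Fintype.card ι * ‖(Fintype.card ι : ℝ)⁻¹ • ∑ j, a j - y‖ ^ 2 := by
  set m : E := (Fintype.card ι : ℝ)⁻¹ • ∑ j, a j
  calc ∑ i, ‖a i - y‖ ^ 2
      = ∑ i, (‖a i - m‖ ^ 2 + 2 * inner ℝ (a i - m) (m - y) + ‖m - y‖ ^ 2) := by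
        refine sum_congr rfl fun i _ => ?_
        rw [← norm_add_sq_real, sub_add_sub_cancel]
    _ = ∑ i, ‖a i - m‖ ^ 2 + 2 * inner ℝ (∑ i, (a i - m)) (m - y)
        + Fintype.card ι * ‖m - y‖ ^ 2 := by
        rw [sum_add_distrib, sum_add_distrib, sum_const, card_univ, ← mul_sum, ← sum_inner,
          nsmul_eq_mul]
    _ = ∑ i, ‖a i - m‖ ^ 2 + Fintype.card ι * ‖m - y‖ ^ 2 := by
        rw [sum_sub_mean_eq_zero, inner_zero_left, mul_zero, add_zero]

lemma sum_norm_sub_mean_sq_le (a : ι → E) (y : E) :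
    ∑ i, ‖a i - (Fintype.card ι : ℝ)⁻¹ • ∑ j, a j‖ ^ 2 ≤ ∑ i, ‖a i - y‖ ^ 2 := by
  rw [sum_norm_sub_sq_eq_sum_norm_sub_mean_sq_add a y]
  exact le_add_of_nonneg_right (by positivity)

end Mean

lemma norm_sub_smul_eq_norm_inv_smul_sub {G Y : Type*} [Group G] [SeminormedAddCommGroup Y]
    [DistribMulAction G Y] {g : G} (hg : ∀ y : Y, ‖g • y‖ = ‖y‖) (y z : Y) :
    ‖y - g • z‖ = ‖g⁻¹ • y - z‖ := by
  rw [← hg (g⁻¹ • y - z), smul_sub, smul_inv_smul]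

lemma equitune_smul {G X Y : Type*} [Group G] [Fintype G] [MulAction G X]
    [AddCommGroup Y] [Module ℝ Y] [DistribMulAction G Y] [SMulCommClass G ℝ Y]
    (M : X → Y) (h : G) (x : X) : equitune G M (h • x) = h • equitune G M x := by
  rw [equitune, equitune, smul_comm h, smul_sum (r := h)]
  congr 1
  refine Fintype.sum_equiv (Equiv.mulRight h) (fun g => g⁻¹ • M (g • h • x))
    (fun g => h • g⁻¹ • M (g • x)) fun k => ?_
  simp only [Equiv.coe_mulRight, mul_inv_rev, mul_smul, smul_inv_smul]

/-- The equi-tuned model `M_G` solves the equi-tuning optimization problem: it is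
`G`-equivariant and, among all `G`-equivariant models `f`, it minimizes the sum over
the group of squared `L₂` distances between the features of the pretrained model and
the equivariant model. -/
theorem equitune_solves_optimization {G X Y : Type*} [Group G] [Fintype G] [MulAction G X]
    [NormedAddCommGroup Y] [InnerProductSpace ℝ Y]
    [DistribMulAction G Y] [SMulCommClass G ℝ Y]
    (hiso : ∀ (g : G) (y : Y), ‖g • y‖ = ‖y‖)
    (M : X → Y) :
    (∀ (h : G) (x : X), equitune G M (h • x) = h • equitune G M x) ∧
    (∀ f : X → Y, (∀ (g : G) (x : X), f (g • x) = g • f x) →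
      ∀ x : X, ∑ g : G, ‖M (g • x) - f (g • x)‖ ^ 2 ≥
        ∑ g : G, ‖M (g • x) - equitune G M (g • x)‖ ^ 2) := by
  refine ⟨equitune_smul M, fun f hf x => ?_⟩
  simp only [hf, equitune_smul, norm_sub_smul_eq_norm_inv_smul_sub (hiso _)]
  exact sum_norm_sub_mean_sq_le (fun g => g⁻¹ • M (g • x)) (f x)
end

section
/- If C : (G → Y) → Z is equivariant with respect to the regular action of G on G → Y and a given G-action on Z (i.e., C(h • F) = h • C(F) for all h ∈ G and F : G → Y), then the stacked model T_G^R = C ∘ M_G^R : X → Z is G-equivariant: T_G^R(h • x) = h • T_G^R(x) for all h ∈ G and x ∈ X. -/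
/-- The regular-feature model `M_G^R : X → (G → Y)`, defined by
`M_G^R(x)(g) = g⁻¹ • M (g • x)`. -/
def regModel (G : Type*) {X Y : Type*} [Group G] [Fintype G] [MulAction G X]
    [AddCommGroup Y] [Module ℝ Y] [DistribMulAction G Y]
    (M : X → Y) (x : X) : G → Y :=
  fun g => g⁻¹ • M (g • x)

/-- The regular action of `G` on functions `F : G → Y`: `(h • F)(g) = h • F (g * h)`. -/
def regAct {G Y : Type*} [Group G] [MulAction G Y] (h : G) (F : G → Y) : G → Y :=
  fun g => h • F (g * h)

theorem regModel_smul {G X Y : Type*} [Group G] [Fintype G] [MulAction G X]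
    [AddCommGroup Y] [Module ℝ Y] [DistribMulAction G Y] (M : X → Y) (h : G) (x : X) :
    regModel G M (h • x) = regAct h (regModel G M x) := by
  funext g
  simp only [regModel, regAct, mul_inv_rev, mul_smul, smul_inv_smul]

theorem stacked_regModel_equivariant_general {G X Y Z : Type*} [Group G] [Fintype G]
    [MulAction G X] [AddCommGroup Y] [Module ℝ Y] [DistribMulAction G Y]
    [MulAction G Z]
    (M : X → Y) (C : (G → Y) → Z)
    (hC : ∀ (h : G) (F : G → Y), C (regAct h F) = h • C F) :
    ∀ (h : G) (x : X), (C ∘ regModel G M) (h • x) = h • (C ∘ regModel G M) x := by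
  intro h x
  rw [Function.comp_apply, regModel_smul, hC, Function.comp_apply]

/-- If `C : (G → Y) → Z` is equivariant with respect to the regular action of `G` on
`G → Y` and a given `G`-action on `Z`, then the stacked model
`T_G^R = C ∘ M_G^R : X → Z` is `G`-equivariant. -/
theorem stacked_regModel_equivariant {G X Y Z : Type*} [Group G] [Fintype G]
    [MulAction G X] [AddCommGroup Y] [Module ℝ Y] [DistribMulAction G Y]
    [SMulCommClass G ℝ Y] [MulAction G Z]
    (M : X → Y) (C : (G → Y) → Z)
    (hC : ∀ (h : G) (F : G → Y), C (regAct h F) = h • C F) :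
    ∀ (h : G) (x : X), (C ∘ regModel G M) (h • x) = h • (C ∘ regModel G M) x :=
  stacked_regModel_equivariant_general M C hC
end

section
/- For a G-equivariant language model φ and a context X₁ consisting only of neutral words (i.e., g • w = w for every word w occurring in X₁), the generation probabilities for group-transformed continuations are equal: P(g • X₂ | X₁) = P(X₂ | X₁) for every sentence X₂ and every g ∈ G; for example, a context of neutral words assigns equal probability to each demographic group's continuation. -/
/-- The probability of generating a sentence `X₂` from context `X₁`, defined
autoregressively: `P(X₂ | X₁) = ∏_{k < length X₂} φ(X₁ ++ take k X₂)(X₂.get k)`. -/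
def genProb {V : Type*} (φ : List V → V → ℝ) (X₁ X₂ : List V) : ℝ :=
  ∏ k : Fin X₂.length, φ (X₁ ++ X₂.take k.val) (X₂.get k)

theorem genProb_map {V : Type*} (φ : List V → V → ℝ) (f : V → V)
    (hf : ∀ (X : List V) (w : V), φ (X.map f) (f w) = φ X w) (X₁ X₂ : List V) :
    genProb φ (X₁.map f) (X₂.map f) = genProb φ X₁ X₂ := by
  refine Fintype.prod_equiv (finCongr (List.length_map f)) _ _ fun k => ?_
  rw [List.get_eq_getElem, List.getElem_map, ← List.map_take, ← List.map_append, hf]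
  rfl

/-- For a `G`-equivariant language model `φ` and a context `X₁` consisting only of
neutral words (fixed by the group action), the generation probabilities of
group-transformed continuations are equal: `P(g • X₂ | X₁) = P(X₂ | X₁)`. -/
theorem neutral_context_fair {V G : Type*} [Group G] [MulAction G V]
    (φ : List V → V → ℝ)
    (hφ : ∀ (g : G) (X : List V) (w : V), φ (List.map (g • ·) X) (g • w) = φ X w)
    (X₁ : List V) (hX₁ : ∀ (g : G), ∀ w ∈ X₁, g • w = w) :
    ∀ (g : G) (X₂ : List V), genProb φ X₁ (List.map (g • ·) X₂) = genProb φ X₁ X₂ := by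
  intro g X₂
  have hX₁_fixed : X₁.map (g • ·) = X₁ := (List.map_congr_left (hX₁ g)).trans X₁.map_id
  calc genProb φ X₁ (X₂.map (g • ·))
      = genProb φ (X₁.map (g • ·)) (X₂.map (g • ·)) := by rw [hX₁_fixed]
    _ = genProb φ X₁ X₂ := genProb_map φ (g • ·) (hφ g) X₁ X₂
end

section
/- For a G-equivariant language model φ and a generated sentence X₂ consisting only of neutral words (i.e., g • w = w for every word w occurring in X₂), the probability of generating X₂ is the same for any group-transformed context: P(X₂ | g • X₁) = P(X₂ | X₁) for every context X₁ and every g ∈ G; for example, neutral words are generated with equal probability for every demographic group's context. -/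
theorem List.map_smul_eq_self {G V : Type*} [SMul G V] {g : G} {l : List V}
    (h : ∀ w ∈ l, g • w = w) : l.map (g • ·) = l :=
  (List.map_congr_left h).trans (List.map_id' l)

theorem genProb_map_smul {G V : Type*} [SMul G V] {φ : List V → V → ℝ}
    (hφ : ∀ (g : G) (X : List V) (w : V), φ (X.map (g • ·)) (g • w) = φ X w)
    (g : G) (X₁ X₂ : List V) :
    genProb φ (X₁.map (g • ·)) (X₂.map (g • ·)) = genProb φ X₁ X₂ := by
  unfold genProb
  rw [← Fin.prod_congr' _ (List.length_map _).symm]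
  refine Finset.prod_congr rfl fun k _ => ?_
  simpa [← List.map_take] using hφ g (X₁ ++ X₂.take k) (X₂.get k)

/-- For a `G`-equivariant language model `φ` and a generated sentence `X₂` consisting
only of neutral words (fixed by the group action), the probability of generating `X₂`
is the same for any group-transformed context: `P(X₂ | g • X₁) = P(X₂ | X₁)`. -/
theorem neutral_generation_fair {V G : Type*} [Group G] [MulAction G V]
    (φ : List V → V → ℝ)
    (hφ : ∀ (g : G) (X : List V) (w : V), φ (List.map (g • ·) X) (g • w) = φ X w)
    (X₂ : List V) (hX₂ : ∀ (g : G), ∀ w ∈ X₂, g • w = w) :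
    ∀ (g : G) (X₁ : List V), genProb φ (List.map (g • ·) X₁) X₂ = genProb φ X₁ X₂ := by
  intro g X₁
  conv_lhs => rw [← List.map_smul_eq_self (hX₂ g)]
  exact genProb_map_smul hφ g X₁ X₂
end
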